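/- arXiv:2107.03566 — 3 statements merged into one kernel-verified Lean document; each statement's English description precedes it below -/
import Mathlib

section
/- Let E be a nilpotent group of nilpotency class at most k acting on a set Y. Let x, y ∈ Y and u ∈ E with u·x = y. If the stabilizer subgroup Stab(x) = {g ∈ E : g·x = x} satisfies Stab(x) ⊆ Stab(y) and Stab(x) = u⁻¹ Stab(y) u, then Stab(x) = Stab(y). -/
/-!
Suppose `H ≤ K` and `u⁻¹ K u ≤ H`. If `β ∈ K \ H`, then `⁅β⁻¹, u⁻¹⁆ = β⁻¹ (u⁻¹ β u)` lies again in
`K \ H`: the factor `u⁻¹ β u` lies in `H`, while `β⁻¹` lies in `K` but not in `H`. Each such step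
moves one term further down the lower central series, so a group in which that series reaches `⊥`
has no element of `K \ H`.
-/

open MulAction
open scoped commutatorElement

namespace Subgroup

variable {G : Type*} [Group G] {H K : Subgroup G} {u β : G}

theorem commutator_inv_inv_mem_sdiff (hHK : H ≤ K) (hconj : ∀ g ∈ K, u⁻¹ * g * u ∈ H)
    (hβK : β ∈ K) (hβH : β ∉ H) : ⁅β⁻¹, u⁻¹⁆ ∈ K ∧ ⁅β⁻¹, u⁻¹⁆ ∉ H := by
  have hdecomp : ⁅β⁻¹, u⁻¹⁆ = β⁻¹ * (u⁻¹ * β * u) := by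
    rw [commutatorElement_def]; group
  have hconjH : u⁻¹ * β * u ∈ H := hconj β hβK
  rw [hdecomp]
  exact ⟨K.mul_mem (K.inv_mem hβK) (hHK hconjH),
    fun hmem => hβH (H.inv_mem_iff.1 ((H.mul_mem_cancel_right hconjH).1 hmem))⟩

theorem exists_mem_lowerCentralSeries_mem_not_mem (hHK : H ≤ K)
    (hconj : ∀ g ∈ K, u⁻¹ * g * u ∈ H) (hβK : β ∈ K) (hβH : β ∉ H) (n : ℕ) :
    ∃ γ ∈ (⊤ : Subgroup G).lowerCentralSeries n, γ ∈ K ∧ γ ∉ H := by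
  induction n with
  | zero => exact ⟨β, mem_top β, hβK, hβH⟩
  | succ n ih =>
    obtain ⟨γ, hγn, hγK, hγH⟩ := ih
    exact ⟨⁅γ⁻¹, u⁻¹⁆, commutator_mem_commutator (inv_mem hγn) (mem_top _),
      commutator_inv_inv_mem_sdiff hHK hconj hγK hγH⟩

theorem eq_of_le_of_conj_le {k : ℕ} (hnilp : (⊤ : Subgroup G).lowerCentralSeries k = ⊥)
    (hHK : H ≤ K) (hconj : ∀ g ∈ K, u⁻¹ * g * u ∈ H) : H = K := by
  refine le_antisymm hHK fun β hβK => ?_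
  by_contra hβH
  obtain ⟨γ, hγk, hγK, hγH⟩ :=
    exists_mem_lowerCentralSeries_mem_not_mem hHK hconj hβK hβH k
  rw [hnilp, mem_bot] at hγk
  exact hγH (hγk ▸ H.one_mem)

end Subgroup

theorem stmt_3_general {E : Type*} [Group E] {Y : Type*} [MulAction E Y]
    (k : ℕ) (hnilp : Subgroup.lowerCentralSeries (⊤ : Subgroup E) k = ⊥)
    (x y : Y) (u : E)
    (hsub : stabilizer E x ≤ stabilizer E y)
    (hconj : ∀ g : E, g ∈ stabilizer E x ↔ u * g * u⁻¹ ∈ stabilizer E y) :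
    stabilizer E x = stabilizer E y :=
  Subgroup.eq_of_le_of_conj_le hnilp hsub fun g hg =>
    (hconj (u⁻¹ * g * u)).2 (by simpa only [mul_assoc, mul_inv_cancel, mul_one, mul_inv_cancel_left])

/-- Stabilizer lemma in nilpotent groups: if `u • x = y`, `Stab(x) ⊆ Stab(y)` and
`Stab(x) = u⁻¹ Stab(y) u`, then `Stab(x) = Stab(y)`. -/
theorem stmt_3 {E : Type*} [Group E] {Y : Type*} [MulAction E Y]
    (k : ℕ) (hnilp : Subgroup.lowerCentralSeries (⊤ : Subgroup E) k = ⊥)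
    (x y : Y) (u : E) (hu : u • x = y)
    (hsub : stabilizer E x ≤ stabilizer E y)
    (hconj : ∀ g : E, g ∈ stabilizer E x ↔ u * g * u⁻¹ ∈ stabilizer E y) :
    stabilizer E x = stabilizer E y :=
  stmt_3_general k hnilp x y u hsub hconj
end

section
/- Let (Y,T) be a minimal topological dynamical system on a compact metric space whose Ellis (enveloping) semigroup E(Y,T) is a group that is nilpotent (of some finite class k). Then (Y,T) is topologically coalescent: every continuous surjection Φ : Y → Y with Φ ∘ T = T ∘ Φ is a homeomorphism. -/
/-! The Ellis group `G` commutes with `Φ`, because the commutant of a continuous map is closed in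
`Y → Y`, and acts transitively on `Y`, by minimality and compactness of the Ellis semigroup.
For an equivariant self-map `Φ` of a transitive `G`-set, `Stab a ≤ Stab (Φ a)` and the two
stabilizers are conjugate; a subgroup of a nilpotent group containing a conjugate of itself equals
it, so `Stab a = Stab (Φ a)`, which forces `Φ` to be injective. A continuous bijection of a compact
metric space is a homeomorphism. -/

open Function Set

namespace Subgroup

/-- Modulo the center the equality holds by induction on the nilpotency class, and the central
error term `z` in `h = g h' g⁻¹ z` lies in `H` because `g H g⁻¹ ≤ H`. -/
theorem map_conj_eq_of_le_of_isNilpotent {G : Type*} [Group G] [Group.IsNilpotent G]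
    {H : Subgroup G} {g : G} (hle : H.map (MulAut.conj g).toMonoidHom ≤ H) :
    H.map (MulAut.conj g).toMonoidHom = H := by
  revert H g
  refine Group.nilpotent_center_quotient_ind (P := fun G _ _ => ∀ {H : Subgroup G} {g : G},
    H.map (MulAut.conj g).toMonoidHom ≤ H → H.map (MulAut.conj g).toMonoidHom = H) G
    (fun _ _ _ _ _ _ => Subsingleton.elim _ _) fun G _ _ ih H g hle => ?_
  refine hle.antisymm fun h hh => ?_
  let π := QuotientGroup.mk' (center G)
  have hleπ : (H.map π).map (MulAut.conj (π g)).toMonoidHom ≤ H.map π := by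
    rintro _ ⟨_, ⟨x, hx, rfl⟩, rfl⟩
    exact ⟨g * x * g⁻¹, hle ⟨x, hx, rfl⟩, by simp⟩
  obtain ⟨_, ⟨h', hh', rfl⟩, hh'π⟩ := (ih hleπ).ge ⟨h, hh, rfl⟩
  obtain ⟨z, hz, hzh⟩ : ∃ z ∈ center G, g * h' * g⁻¹ * z = h := by
    refine ⟨(g * h' * g⁻¹)⁻¹ * h, QuotientGroup.eq.mp ?_, by group⟩
    simpa [π] using hh'π
  have hzH : z ∈ H := by
    have : z = (g * h' * g⁻¹)⁻¹ * h := by rw [← hzh]; group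
    exact this ▸ H.mul_mem (H.inv_mem (hle ⟨h', hh', rfl⟩)) hh
  refine ⟨h' * z, H.mul_mem hh' hzH, ?_⟩
  simp only [← hzh, MulEquiv.coe_toMonoidHom, MulAut.conj_apply, mul_assoc,
    mem_center_iff.mp hz g⁻¹]

end Subgroup

theorem MulActionHom.injective_of_isNilpotent {G X : Type*} [Group G] [Group.IsNilpotent G]
    [MulAction G X] [MulAction.IsPretransitive G X] (Φ : X →[G] X) : Injective Φ := by
  intro a b hab
  have hstab : MulAction.stabilizer G a ≤ MulAction.stabilizer G (Φ a) := fun g hg => by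
    rw [MulAction.mem_stabilizer_iff, ← map_smul, MulAction.mem_stabilizer_iff.mp hg]
  obtain ⟨q, hq⟩ := MulAction.exists_smul_eq G (Φ a) a
  have hstab' : MulAction.stabilizer G (Φ a) ≤ MulAction.stabilizer G a := by
    have hconj := MulAction.stabilizer_smul_eq_stabilizer_map_conj q (Φ a)
    rw [hq] at hconj
    rw [hconj] at hstab ⊢
    exact (Subgroup.map_conj_eq_of_le_of_isNilpotent hstab).ge
  obtain ⟨g, rfl⟩ := MulAction.exists_smul_eq G a b
  have hg : g ∈ MulAction.stabilizer G (Φ a) := by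
    rw [MulAction.mem_stabilizer_iff, ← map_smul, ← hab]
  exact (hstab' hg).symm

theorem isClosed_setOf_commute {X : Type*} [TopologicalSpace X] [T2Space X] {Φ : X → X}
    (hΦ : Continuous Φ) : IsClosed {f : X → X | Function.Commute Φ f} := by
  simp only [Function.Commute, Semiconj, ofPred_forall]
  exact isClosed_iInter fun x => isClosed_eq (hΦ.comp (continuous_apply x)) (continuous_apply _)

theorem Function.Commute.perm_zpow_right {X : Type*} {Φ : X → X} {σ : Equiv.Perm X}
    (h : Function.Commute Φ σ) : ∀ n : ℤ, Function.Commute Φ ⇑(σ ^ n)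
  | .ofNat n => by simpa [Equiv.Perm.coe_pow] using h.iterate_right n
  | .negSucc n => by
    have hinv : Function.Commute Φ ⇑σ⁻¹ := h.inverses_right σ.right_inv σ.left_inv
    simpa [zpow_negSucc, ← inv_pow, Equiv.Perm.coe_pow] using hinv.iterate_right (n + 1)

/-- `closure S` is compact (Tychonoff), so its image under `f ↦ f y` is closed. -/
theorem exists_mem_closure_apply_eq {X : Type*} [TopologicalSpace X] [CompactSpace X]
    [T2Space X] {S : Set (X → X)} {y : X} (hS : Dense ((fun f => f y) '' S)) (z : X) :
    ∃ f ∈ closure S, f y = z := by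
  have := image_closure_of_isCompact (s := S) isClosed_closure.isCompact
    (continuous_apply (A := fun _ : X => X) y).continuousOn
  rw [hS.closure_eq] at this
  exact this.ge (mem_univ z)

/-- A minimal system whose Ellis (enveloping) semigroup is a nilpotent group is
topologically coalescent: every continuous equivariant surjection `Φ : Y → Y` is a
homeomorphism. The Ellis semigroup is the closure of `{Tⁿ : n ∈ ℤ}` in `Y → Y` with
the product topology; the hypothesis says it coincides with (the image of) a nilpotent
group of bijections of `Y`. -/
theorem stmt_5 {Y : Type*} [MetricSpace Y] [CompactSpace Y]
    (T : Y ≃ₜ Y)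
    (hmin : ∀ y : Y, Dense (Set.range fun n : ℤ => (T.toEquiv ^ n) y))
    (G : Subgroup (Equiv.Perm Y))
    (hG : (fun g : Equiv.Perm Y => ⇑g) '' (G : Set (Equiv.Perm Y)) =
      closure (Set.range fun n : ℤ => ⇑(T.toEquiv ^ n)))
    (hnilp : Group.IsNilpotent G)
    (Φ : Y → Y) (hΦc : Continuous Φ) (hΦs : Surjective Φ)
    (hΦT : Φ ∘ T = T ∘ Φ) :
    ∃ h : Y ≃ₜ Y, ⇑h = Φ := by
  have hcomm : ∀ g ∈ G, Function.Commute Φ ⇑g := by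
    have hT : Function.Commute Φ ⇑T.toEquiv := congrFun hΦT
    have := closure_minimal (range_subset_iff.2 hT.perm_zpow_right) (isClosed_setOf_commute hΦc)
    exact fun g hg => this (hG ▸ mem_image_of_mem _ hg)
  have : MulAction.IsPretransitive G Y := ⟨fun y z => by
    obtain ⟨f, hf, rfl⟩ := exists_mem_closure_apply_eq
      (S := range fun n : ℤ => ⇑(T.toEquiv ^ n)) (by rw [← range_comp]; exact hmin y) z
    obtain ⟨g, hg, rfl⟩ := hG ▸ hf
    exact ⟨⟨g, hg⟩, rfl⟩⟩
  let Ψ : Y →[G] Y := ⟨Φ, fun g y => hcomm g g.2 y⟩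
  exact ⟨hΦc.homeoOfEquivCompactToT2 (f := .ofBijective Φ ⟨Ψ.injective_of_isNilpotent, hΦs⟩),
    rfl⟩
end

section
/- Let (Y,T) be a minimal compact metric dynamical system whose Ellis semigroup is a nilpotent group, and suppose additionally (Y,T) is uniquely ergodic with invariant measure ν. Suppose π : Y → Y is a Borel measurable map, defined ν-almost everywhere, with π ∘ T = T ∘ π a.e. and π_*ν = ν, and suppose there exists a continuous factor map π̂ : Y → Y with π = π̂ ν-a.e. Then π is invertible on a T-invariant Borel set of full ν-measure, i.e., π is a measure-theoretic isomorphism of (Y, ν, T) with itself. -/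
open Function Set MeasureTheory

/-!
A continuous `π̂` commuting with `T` commutes with every element of the Ellis group `G`, and `G`
acts transitively on `Y` by minimality. For an equivariant self-map of a transitive `G`-set, the
stabiliser of a point `y` is conjugated by some `r` (with `r y = π̂ y`) into itself; in a
nilpotent group this forces `r` to normalise it, which makes `π̂` injective. Hence `π̂` is a
homeomorphism, and `π`, which agrees with it on a `T`-invariant conull set, is a measurable
isomorphism there.
-/

theorem Subgroup.conj_mem_of_forall_inv_conj_mem {K : Type*} [Group K] [Group.IsNilpotent K]
    {H : Subgroup K} {x : K} (hx : ∀ h ∈ H, x⁻¹ * h * x ∈ H) {h : K} (hh : h ∈ H) :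
    x * h * x⁻¹ ∈ H := by
  revert H x h
  refine Group.nilpotent_center_quotient_ind (P := fun K _ _ => ∀ {H : Subgroup K} {x : K},
    (∀ h ∈ H, x⁻¹ * h * x ∈ H) → ∀ {h : K}, h ∈ H → x * h * x⁻¹ ∈ H) K ?_ ?_
  · intro K _ _ H x _ h hh
    rwa [Subsingleton.elim (x * h * x⁻¹) h]
  · intro K _ _ ih H x hx h hh
    let φ := QuotientGroup.mk' (Subgroup.center K)
    obtain ⟨b, hb, hbφ⟩ : φ (x * h * x⁻¹) ∈ H.map φ := by
      simpa only [map_mul, map_inv] using ih (H := H.map φ) (x := φ x)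
        (by rintro _ ⟨a, ha, rfl⟩; exact ⟨x⁻¹ * a * x, hx a ha, by simp⟩) ⟨h, hh, rfl⟩
    obtain ⟨z, hz, hbz⟩ : ∃ z ∈ Subgroup.center K, x * h * x⁻¹ = b * z :=
      ⟨b⁻¹ * (x * h * x⁻¹), QuotientGroup.eq.mp hbφ, by group⟩
    have hzx : x⁻¹ * z * x = z := by
      rw [Subgroup.mem_center_iff.mp hz x⁻¹, inv_mul_cancel_right]
    have hz_eq : z = (x⁻¹ * b * x)⁻¹ * h := by
      rw [show h = x⁻¹ * (b * z) * x by rw [← hbz]; group]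
      conv_lhs => rw [← hzx]
      group
    have hzH : z ∈ H := hz_eq ▸ H.mul_mem (H.inv_mem (hx b hb)) hh
    exact hbz ▸ H.mul_mem hb hzH

theorem MulAction.injective_of_map_smul {G Y : Type*} [Group G] [Group.IsNilpotent G]
    [MulAction G Y] [MulAction.IsPretransitive G Y] {f : Y → Y}
    (hf : ∀ (g : G) (y : Y), f (g • y) = g • f y) : Injective f := by
  intro a b hab
  obtain ⟨r, hr⟩ := MulAction.exists_smul_eq G a (f a)
  obtain ⟨g, rfl⟩ := MulAction.exists_smul_eq G a b
  have hconj : ∀ h ∈ MulAction.stabilizer G a, r⁻¹ * h * r ∈ MulAction.stabilizer G a := by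
    intro h hh
    rw [MulAction.mem_stabilizer_iff] at hh ⊢
    rw [mul_smul, mul_smul, hr, ← hf, hh, ← hr, inv_smul_smul]
  have hg : r⁻¹ * g * r ∈ MulAction.stabilizer G a := by
    rw [MulAction.mem_stabilizer_iff, mul_smul, mul_smul, hr, ← hf, ← hab, ← hr, inv_smul_smul]
  have := Subgroup.conj_mem_of_forall_inv_conj_mem hconj hg
  rw [show r * (r⁻¹ * g * r) * r⁻¹ = g by group, MulAction.mem_stabilizer_iff] at this
  exact this.symm

def ellisSemigroup {Y : Type*} [TopologicalSpace Y] (T : Equiv.Perm Y) : Set (Y → Y) :=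
  closure (range fun n : ℤ => ⇑(T ^ n))

theorem Function.Commute.perm_zpow_right_s6 {Y : Type*} {f : Y → Y} {T : Equiv.Perm Y}
    (h : Function.Commute f T) (n : ℤ) : Function.Commute f ⇑(T ^ n) := by
  refine zpow_induction_right (P := fun g : Equiv.Perm Y => Function.Commute f g)
    Function.Commute.id_right (fun a ha => ha.comp_right h) (fun a ha => ?_) n
  exact ha.comp_right (h.inverses_right T.right_inv T.left_inv)

theorem Function.Commute.of_mem_ellisSemigroup {Y : Type*} [TopologicalSpace Y] [T2Space Y]
    {f : Y → Y} (hf : Continuous f) {T : Equiv.Perm Y} (hT : Function.Commute f T)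
    {p : Y → Y} (hp : p ∈ ellisSemigroup T) : Function.Commute f p := by
  have hclosed : IsClosed {p : Y → Y | Function.Commute f p} := by
    simp only [Function.Commute, Semiconj, ofPred_forall]
    exact isClosed_iInter fun y =>
      isClosed_eq (hf.comp (continuous_apply y)) (continuous_apply (f y))
  exact closure_minimal (range_subset_iff.mpr hT.perm_zpow_right_s6) hclosed hp

theorem exists_mem_ellisSemigroup_apply_eq {Y : Type*} [TopologicalSpace Y] [CompactSpace Y]
    [T2Space Y] {T : Equiv.Perm Y} {y : Y} (hy : Dense (range fun n : ℤ => (T ^ n) y)) (a : Y) :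
    ∃ p ∈ ellisSemigroup T, p y = a := by
  have hclosed : IsClosed ((fun p : Y → Y => p y) '' ellisSemigroup T) :=
    (isClosed_closure.isCompact.image (continuous_apply y)).isClosed
  have horbit : range (fun n : ℤ => (T ^ n) y) ⊆ (fun p : Y → Y => p y) '' ellisSemigroup T := by
    rintro _ ⟨n, rfl⟩
    exact ⟨_, subset_closure ⟨n, rfl⟩, rfl⟩
  exact closure_minimal horbit hclosed (hy.closure_eq ▸ mem_univ a)

theorem injective_of_commute_of_nilpotent_ellisSemigroup {Y : Type*} [TopologicalSpace Y]
    [CompactSpace Y] [T2Space Y] {T : Equiv.Perm Y}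
    (hmin : ∀ y : Y, Dense (range fun n : ℤ => (T ^ n) y)) (G : Subgroup (Equiv.Perm Y))
    (hG : (fun g : Equiv.Perm Y => ⇑g) '' (G : Set (Equiv.Perm Y)) = ellisSemigroup T)
    [Group.IsNilpotent G] {f : Y → Y} (hf : Continuous f) (hfT : Function.Commute f T) :
    Injective f := by
  have : MulAction.IsPretransitive G Y := ⟨fun y a => by
    obtain ⟨p, hp, rfl⟩ := exists_mem_ellisSemigroup_apply_eq (hmin y) a
    obtain ⟨g, hg, rfl⟩ := hG.symm ▸ hp
    exact ⟨⟨g, hg⟩, rfl⟩⟩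
  refine MulAction.injective_of_map_smul (G := G) fun g y => ?_
  have hg : ⇑(g : Equiv.Perm Y) ∈ ellisSemigroup T := hG ▸ ⟨g, g.2, rfl⟩
  exact (hfT.of_mem_ellisSemigroup hf hg).eq y

section Measure

variable {Y : Type*} [MeasurableSpace Y] {ν : Measure Y} {T : Y ≃ᵐ Y}

theorem MeasureTheory.MeasurePreserving.perm_zpow (hT : MeasurePreserving T ν ν) (n : ℤ) :
    MeasurePreserving ⇑(T.toEquiv ^ n) ν ν :=
  zpow_induction_right (P := fun g : Equiv.Perm Y => MeasurePreserving g ν ν)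
    (MeasurePreserving.id ν) (fun _ ha => ha.comp hT) (fun _ ha => ha.comp (hT.symm T)) n

theorem MeasureTheory.MeasurePreserving.exists_invariant_subset_of_ae
    (hT : MeasurePreserving T ν ν) {A : Set Y} (hA : ∀ᵐ y ∂ν, y ∈ A) :
    ∃ Y₀ ⊆ A, MeasurableSet Y₀ ∧ T ⁻¹' Y₀ = Y₀ ∧ ν Y₀ᶜ = 0 := by
  set B := (toMeasurable ν Aᶜ)ᶜ
  have hB : MeasurableSet B := (measurableSet_toMeasurable _ _).compl
  have hBc : ν Bᶜ = 0 := by rw [compl_compl, measure_toMeasurable]; exact hA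
  refine ⟨⋂ n : ℤ, ⇑(T.toEquiv ^ n) ⁻¹' B, ?_, ?_, ?_, ?_⟩
  · exact (iInter_subset _ 0).trans (compl_subset_comm.mp (subset_toMeasurable _ _))
  · exact MeasurableSet.iInter fun n => (hT.perm_zpow n).measurable hB
  · ext y
    have hshift (n : ℤ) : (T.toEquiv ^ n) (T y) = (T.toEquiv ^ (n + 1)) y := by
      rw [zpow_add_one]; rfl
    simp only [mem_preimage, mem_iInter, hshift]
    exact (Equiv.addRight (1 : ℤ)).forall_congr_right (q := fun n => (T.toEquiv ^ n) y ∈ B)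
  · rw [compl_iInter]
    refine measure_iUnion_null fun n => ?_
    rw [← preimage_compl, (hT.perm_zpow n).measure_preimage hB.compl.nullMeasurableSet, hBc]

theorem MeasureTheory.MeasurePreserving.exists_invariant_injOn_of_ae_eq
    (hT : MeasurePreserving T ν ν) {e : Y ≃ᵐ Y} (he : MeasurePreserving e ν ν)
    (heT : Function.Commute e T) {π : Y → Y} (hπ : π =ᵐ[ν] e) :
    ∃ Y₀, MeasurableSet Y₀ ∧ T ⁻¹' Y₀ = Y₀ ∧ ν Y₀ᶜ = 0 ∧ InjOn π Y₀ ∧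
      MeasurableSet (π '' Y₀) ∧ T ⁻¹' (π '' Y₀) = π '' Y₀ ∧ ν (π '' Y₀)ᶜ = 0 := by
  obtain ⟨Y₀, hY₀A, hY₀, hTY₀, hY₀c⟩ := hT.exists_invariant_subset_of_ae hπ
  have himage : π '' Y₀ = e.symm ⁻¹' Y₀ := by
    rw [image_congr fun y hy => hY₀A hy, e.image_eq_preimage_symm]
  refine ⟨Y₀, hY₀, hTY₀, hY₀c, e.injective.injOn.congr fun y hy => (hY₀A hy).symm, ?_, ?_, ?_⟩
  · exact himage ▸ e.symm.measurable hY₀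
  · have hsymm : Function.Commute e.symm T :=
      heT.inverse_left e.symm_apply_apply e.apply_symm_apply
    rw [himage, ← preimage_comp, hsymm.comp_eq, preimage_comp, hTY₀]
  · rw [himage, ← preimage_compl, (he.symm e).measure_preimage hY₀.compl.nullMeasurableSet, hY₀c]

end Measure

theorem stmt_6_general {Y : Type*} [MetricSpace Y] [CompactSpace Y]
    [MeasurableSpace Y] [BorelSpace Y]
    (T : Y ≃ₜ Y)
    (hmin : ∀ y : Y, Dense (Set.range fun n : ℤ => (T.toEquiv ^ n) y))
    (G : Subgroup (Equiv.Perm Y))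
    (hG : (fun g : Equiv.Perm Y => ⇑g) '' (G : Set (Equiv.Perm Y)) =
      closure (Set.range fun n : ℤ => ⇑(T.toEquiv ^ n)))
    (hnilp : Group.IsNilpotent G)
    (ν : Measure Y) [IsProbabilityMeasure ν] (hinv : ν.map T = ν)
    (π : Y → Y)
    (hπν : ν.map π = ν)
    (πhat : Y → Y) (hπhatc : Continuous πhat) (hπhats : Surjective πhat)
    (hπhatT : πhat ∘ T = T ∘ πhat)
    (hae : ∀ᵐ y ∂ν, π y = πhat y) :
    ∃ Y₀ : Set Y, MeasurableSet Y₀ ∧ T ⁻¹' Y₀ = Y₀ ∧ ν Y₀ = 1 ∧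
      Set.InjOn π Y₀ ∧ MeasurableSet (π '' Y₀) ∧ T ⁻¹' (π '' Y₀) = π '' Y₀ ∧
      ν (π '' Y₀) = 1 := by
  have hcomm : Function.Commute πhat T := semiconj_iff_comp_eq.mpr hπhatT
  have hinj : Injective πhat :=
    injective_of_commute_of_nilpotent_ellisSemigroup hmin G hG hπhatc hcomm
  let e : Y ≃ₜ Y := hπhatc.homeoOfEquivCompactToT2 (f := .ofBijective πhat ⟨hinj, hπhats⟩)
  have he : MeasurePreserving e ν ν :=
    ⟨e.continuous.measurable, (Measure.map_congr hae).symm.trans hπν⟩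
  obtain ⟨Y₀, hY₀, hTY₀, hY₀c, hπinj, himg, hTimg, himgc⟩ :=
    MeasurePreserving.exists_invariant_injOn_of_ae_eq (T := T.toMeasurableEquiv)
      (e := e.toMeasurableEquiv) ⟨T.continuous.measurable, hinv⟩ he hcomm hae
  exact ⟨Y₀, hY₀, hTY₀, (prob_compl_eq_zero_iff hY₀).mp hY₀c, hπinj, himg, hTimg,
    (prob_compl_eq_zero_iff himg).mp himgc⟩

/-- Measurable coalescence: for a minimal uniquely ergodic system whose Ellis semigroup is
a nilpotent group, a measurable a.e.-equivariant measure-preserving self-factor map `π`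
which agrees a.e. with a continuous factor map `π̂` is invertible on a `T`-invariant Borel
set of full measure, i.e. is a measure-theoretic isomorphism of `(Y, ν, T)` with itself. -/
theorem stmt_6 {Y : Type*} [MetricSpace Y] [CompactSpace Y]
    [MeasurableSpace Y] [BorelSpace Y]
    (T : Y ≃ₜ Y)
    (hmin : ∀ y : Y, Dense (Set.range fun n : ℤ => (T.toEquiv ^ n) y))
    (G : Subgroup (Equiv.Perm Y))
    (hG : (fun g : Equiv.Perm Y => ⇑g) '' (G : Set (Equiv.Perm Y)) =
      closure (Set.range fun n : ℤ => ⇑(T.toEquiv ^ n)))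
    (hnilp : Group.IsNilpotent G)
    (ν : Measure Y) [IsProbabilityMeasure ν] (hinv : ν.map T = ν)
    (hue : ∀ ν' : Measure Y, IsProbabilityMeasure ν' → ν'.map T = ν' → ν' = ν)
    (π : Y → Y) (hπm : Measurable π)
    (hπT : ∀ᵐ y ∂ν, π (T y) = T (π y))
    (hπν : ν.map π = ν)
    (πhat : Y → Y) (hπhatc : Continuous πhat) (hπhats : Surjective πhat)
    (hπhatT : πhat ∘ T = T ∘ πhat)
    (hae : ∀ᵐ y ∂ν, π y = πhat y) :
    ∃ Y₀ : Set Y, MeasurableSet Y₀ ∧ T ⁻¹' Y₀ = Y₀ ∧ ν Y₀ = 1 ∧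
      Set.InjOn π Y₀ ∧ MeasurableSet (π '' Y₀) ∧ T ⁻¹' (π '' Y₀) = π '' Y₀ ∧
      ν (π '' Y₀) = 1 :=
  stmt_6_general T hmin G hG hnilp ν hinv π hπν πhat hπhatc hπhats hπhatT hae
end
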